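/- Let M, N be non-negative integers and D₁, D₂, R₀ > 0 with R₀ > D₁ + D₂. For R ≥ R₀ set X₊ = (0,0,R/2), X₋ = (0,0,−R/2) and let C(R) = ℝ³ ∖ (B(X₊,D₁) ∪ B(X₋,D₂)), where B(X,D) is the open ball of radius D about X. Then for every R ≥ R₀ the function x ↦ ‖x − X₊‖^{−(2M+4)} ‖x − X₋‖^{−(2N+4)} is integrable on C(R), and there is a constant K > 0 such that F(R) := ∫_{C(R)} ‖x − X₊‖^{−(2M+4)} ‖x − X₋‖^{−(2N+4)} dx ≤ K (R^{−(2M+4)} + R^{−(2N+4)}) for all R ≥ R₀. -/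
import Mathlib


open MeasureTheory Real

noncomputable section

/-- `ℝ³` with the Euclidean norm. -/
abbrev E3 : Type := EuclideanSpace ℝ (Fin 3)

/-- Points of `ℝ³` from three coordinates. -/
def mk3 (a b c : ℝ) : E3 := (WithLp.equiv 2 (Fin 3 → ℝ)).symm ![a, b, c]

lemma mk3_meas (c : E3) (p : ℕ) : Measurable fun x : E3 => (‖x - c‖ ^ p)⁻¹ :=
  (((continuous_id.sub continuous_const).norm.pow p).measurable).inv

lemma finrank_E3 : Module.finrank ℝ E3 = 3 := finrank_euclideanSpace_fin

lemma integrableOn_inv_pow_norm (p : ℕ) (hp : 3 < p) {D : ℝ} (hD : 0 < D) (c : E3) :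
    IntegrableOn (fun x : E3 => (‖x - c‖ ^ p)⁻¹) (Metric.ball c D)ᶜ volume := by
  have hrank : (Module.finrank ℝ E3 : ℝ) < (p : ℝ) := by
    rw [finrank_E3]; exact_mod_cast hp
  have hint : Integrable (fun x : E3 => (1 + ‖x - c‖) ^ (-(p : ℝ))) volume :=
    (integrable_one_add_norm hrank).comp_sub_right c
  refine ((hint.const_mul ((1 + D⁻¹) ^ p)).integrableOn).mono'
    ((mk3_meas c p).aestronglyMeasurable) ?_
  refine (ae_restrict_iff' (Metric.isOpen_ball.measurableSet.compl)).2
    (Filter.Eventually.of_forall fun x hx => ?_)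
  set t : ℝ := ‖x - c‖ with ht
  have hDt : D ≤ t := by
    have := hx
    simp only [Set.mem_compl_iff, Metric.mem_ball, dist_eq_norm, not_lt] at this
    exact this
  have ht0 : 0 < t := lt_of_lt_of_le hD hDt
  have hrpow : (1 + t) ^ (-(p : ℝ)) = ((1 + t) ^ p)⁻¹ := by
    rw [Real.rpow_neg (by positivity), Real.rpow_natCast]
  rw [Real.norm_eq_abs, abs_of_nonneg (by positivity), hrpow]
  have key : (1 + t) ^ p ≤ (1 + D⁻¹) ^ p * t ^ p := by
    rw [← mul_pow]
    refine pow_le_pow_left₀ (by positivity) ?_ p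
    have h1 : (1 : ℝ) ≤ D⁻¹ * t := by
      rw [← inv_mul_cancel₀ (ne_of_gt hD)]
      exact mul_le_mul_of_nonneg_left hDt (by positivity)
    nlinarith
  rw [inv_le_iff_one_le_mul₀ (by positivity)]
  calc (1 : ℝ) = ((1 + t) ^ p) * ((1 + t) ^ p)⁻¹ := by field_simp
    _ ≤ ((1 + D⁻¹) ^ p * t ^ p) * ((1 + t) ^ p)⁻¹ := by
        exact mul_le_mul_of_nonneg_right key (by positivity)
    _ = (1 + D⁻¹) ^ p * ((1 + t) ^ p)⁻¹ * t ^ p := by ring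

lemma integral_inv_pow_norm_translate (p : ℕ) (D : ℝ) (c : E3) :
    ∫ x in (Metric.ball c D)ᶜ, (‖x - c‖ ^ p)⁻¹ =
      ∫ y in (Metric.ball (0 : E3) D)ᶜ, (‖y‖ ^ p)⁻¹ := by
  have hpre : (fun y : E3 => y + c) ⁻¹' (Metric.ball c D)ᶜ = (Metric.ball (0 : E3) D)ᶜ := by
    ext y
    simp [Metric.mem_ball, dist_eq_norm]
  have h := (measurePreserving_add_right (volume : Measure E3) c).setIntegral_preimage_emb
    (MeasurableEquiv.addRight c).measurableEmbedding
    (fun x : E3 => (‖x - c‖ ^ p)⁻¹) (Metric.ball c D)ᶜ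
  rw [hpre] at h
  simpa using h.symm

lemma mk3_sub (a b : ℝ) : mk3 0 0 a - mk3 0 0 b = mk3 0 0 (a - b) := by
  unfold mk3
  ext i
  fin_cases i <;> simp

lemma norm_mk3 (a : ℝ) : ‖mk3 0 0 a‖ = |a| := by
  rw [EuclideanSpace.norm_eq]
  have h0 : (mk3 0 0 a) 0 = 0 := by simp [mk3]
  have h1 : (mk3 0 0 a) 1 = 0 := by simp [mk3]
  have h2 : (mk3 0 0 a) 2 = a := by simp [mk3]
  rw [Fin.sum_univ_three, h0, h1, h2]
  simp [Real.sqrt_sq_eq_abs]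

/-- With `X₊ = (0,0,R/2)`, `X₋ = (0,0,-R/2)` and
`C(R) = ℝ³ ∖ (B(X₊,D₁) ∪ B(X₋,D₂))`, the function
`x ↦ ‖x-X₊‖^{-(2M+4)} ‖x-X₋‖^{-(2N+4)}` is integrable on `C(R)` for every
`R ≥ R₀ > D₁ + D₂`, and `F(R) = ∫_{C(R)} ⋯ ≤ K (R^{-(2M+4)} + R^{-(2N+4)})`
for some constant `K > 0`. -/
theorem quartic_tail_estimate (M N : ℕ) (D1 D2 R0 : ℝ)
    (hD1 : 0 < D1) (hD2 : 0 < D2) (hR0 : 0 < R0) (hsep : D1 + D2 < R0) :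
    (∀ R : ℝ, R0 ≤ R →
      IntegrableOn (fun x : E3 =>
          (‖x - mk3 0 0 (R / 2)‖ ^ (2 * M + 4))⁻¹ *
            (‖x - mk3 0 0 (-(R / 2))‖ ^ (2 * N + 4))⁻¹)
        ((Metric.ball (mk3 0 0 (R / 2)) D1 ∪ Metric.ball (mk3 0 0 (-(R / 2))) D2)ᶜ)
        volume) ∧
    ∃ K : ℝ, 0 < K ∧ ∀ R : ℝ, R0 ≤ R →
      (∫ x in (Metric.ball (mk3 0 0 (R / 2)) D1 ∪ Metric.ball (mk3 0 0 (-(R / 2))) D2)ᶜ,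
          (‖x - mk3 0 0 (R / 2)‖ ^ (2 * M + 4))⁻¹ *
            (‖x - mk3 0 0 (-(R / 2))‖ ^ (2 * N + 4))⁻¹)
        ≤ K * ((R ^ (2 * M + 4))⁻¹ + (R ^ (2 * N + 4))⁻¹) := by
  set p : ℕ := 2 * M + 4 with hp
  set q : ℕ := 2 * N + 4 with hq
  have hp3 : 3 < p := by omega
  have hq3 : 3 < q := by omega
  -- basic data, for each R ≥ R0
  have main : ∀ R : ℝ, R0 ≤ R →
      IntegrableOn (fun x : E3 =>
          (‖x - mk3 0 0 (R / 2)‖ ^ p)⁻¹ * (‖x - mk3 0 0 (-(R / 2))‖ ^ q)⁻¹)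
        ((Metric.ball (mk3 0 0 (R / 2)) D1 ∪ Metric.ball (mk3 0 0 (-(R / 2))) D2)ᶜ) volume ∧
      (∫ x in (Metric.ball (mk3 0 0 (R / 2)) D1 ∪ Metric.ball (mk3 0 0 (-(R / 2))) D2)ᶜ,
          (‖x - mk3 0 0 (R / 2)‖ ^ p)⁻¹ * (‖x - mk3 0 0 (-(R / 2))‖ ^ q)⁻¹)
        ≤ (2 ^ q * ∫ y in (Metric.ball (0 : E3) D1)ᶜ, (‖y‖ ^ p)⁻¹) * (R ^ q)⁻¹
          + (2 ^ p * ∫ y in (Metric.ball (0 : E3) D2)ᶜ, (‖y‖ ^ q)⁻¹) * (R ^ p)⁻¹ := by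
    intro R hR
    have hRpos : 0 < R := lt_of_lt_of_le hR0 hR
    set cp : E3 := mk3 0 0 (R / 2)
    set cm : E3 := mk3 0 0 (-(R / 2))
    set S : Set E3 := (Metric.ball cp D1 ∪ Metric.ball cm D2)ᶜ with hS
    have hSmeas : MeasurableSet S :=
      (Metric.isOpen_ball.union Metric.isOpen_ball).measurableSet.compl
    have hSsub1 : S ⊆ (Metric.ball cp D1)ᶜ :=
      Set.compl_subset_compl.2 Set.subset_union_left
    have hSsub2 : S ⊆ (Metric.ball cm D2)ᶜ :=
      Set.compl_subset_compl.2 Set.subset_union_right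
    have hI1 : IntegrableOn (fun x : E3 => (‖x - cp‖ ^ p)⁻¹) (Metric.ball cp D1)ᶜ volume :=
      integrableOn_inv_pow_norm p hp3 hD1 cp
    have hI2 : IntegrableOn (fun x : E3 => (‖x - cm‖ ^ q)⁻¹) (Metric.ball cm D2)ᶜ volume :=
      integrableOn_inv_pow_norm q hq3 hD2 cm
    -- distance between centers
    have hcc : ‖cp - cm‖ = R := by
      rw [show cp - cm = mk3 0 0 R by rw [mk3_sub]; ring_nf, norm_mk3, abs_of_pos hRpos]
    -- pointwise bound
    set g : E3 → ℝ := fun x =>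
      ((R / 2) ^ q)⁻¹ * (‖x - cp‖ ^ p)⁻¹ + ((R / 2) ^ p)⁻¹ * (‖x - cm‖ ^ q)⁻¹ with hg
    have hbound : ∀ x ∈ S,
        (‖x - cp‖ ^ p)⁻¹ * (‖x - cm‖ ^ q)⁻¹ ≤ g x := by
      intro x _
      have htri : R ≤ ‖x - cp‖ + ‖x - cm‖ := by
        calc R = ‖cp - cm‖ := hcc.symm
          _ = ‖(x - cm) - (x - cp)‖ := by rw [show (x - cm) - (x - cp) = cp - cm by abel]
          _ ≤ ‖x - cm‖ + ‖x - cp‖ := norm_sub_le _ _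
          _ = ‖x - cp‖ + ‖x - cm‖ := by ring
      rcases le_total ‖x - cp‖ ‖x - cm‖ with hc | hc
      · have hm : R / 2 ≤ ‖x - cm‖ := by linarith
        have h1 : (‖x - cm‖ ^ q)⁻¹ ≤ ((R / 2) ^ q)⁻¹ := by
          apply inv_anti₀ (by positivity)
          exact pow_le_pow_left₀ (by positivity) hm q
        have h2 : (‖x - cp‖ ^ p)⁻¹ * (‖x - cm‖ ^ q)⁻¹
            ≤ ((R / 2) ^ q)⁻¹ * (‖x - cp‖ ^ p)⁻¹ := by
          rw [mul_comm (((R / 2) ^ q)⁻¹)]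
          exact mul_le_mul_of_nonneg_left h1 (by positivity)
        refine h2.trans ?_
        have : 0 ≤ ((R / 2) ^ p)⁻¹ * (‖x - cm‖ ^ q)⁻¹ := by positivity
        simp only [hg]; linarith
      · have hm : R / 2 ≤ ‖x - cp‖ := by linarith
        have h1 : (‖x - cp‖ ^ p)⁻¹ ≤ ((R / 2) ^ p)⁻¹ := by
          apply inv_anti₀ (by positivity)
          exact pow_le_pow_left₀ (by positivity) hm p
        have h2 : (‖x - cp‖ ^ p)⁻¹ * (‖x - cm‖ ^ q)⁻¹
            ≤ ((R / 2) ^ p)⁻¹ * (‖x - cm‖ ^ q)⁻¹ :=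
          mul_le_mul_of_nonneg_right h1 (by positivity)
        refine h2.trans ?_
        have : 0 ≤ ((R / 2) ^ q)⁻¹ * (‖x - cp‖ ^ p)⁻¹ := by positivity
        simp only [hg]; linarith
    -- integrability of g on S
    have hg1 : IntegrableOn (fun x : E3 => ((R / 2) ^ q)⁻¹ * (‖x - cp‖ ^ p)⁻¹) S volume :=
      ((hI1.mono_set hSsub1).const_mul _)
    have hg2 : IntegrableOn (fun x : E3 => ((R / 2) ^ p)⁻¹ * (‖x - cm‖ ^ q)⁻¹) S volume :=
      ((hI2.mono_set hSsub2).const_mul _)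
    have hgint : IntegrableOn g S volume := hg1.add hg2
    -- integrability of f on S
    have hfmeas : AEStronglyMeasurable
        (fun x : E3 => (‖x - cp‖ ^ p)⁻¹ * (‖x - cm‖ ^ q)⁻¹) (volume.restrict S) :=
      (((mk3_meas cp p).mul (mk3_meas cm q)).aestronglyMeasurable)
    have hfint : IntegrableOn
        (fun x : E3 => (‖x - cp‖ ^ p)⁻¹ * (‖x - cm‖ ^ q)⁻¹) S volume := by
      refine hgint.mono' hfmeas ?_
      refine (ae_restrict_iff' hSmeas).2 (Filter.Eventually.of_forall fun x hx => ?_)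
      rw [Real.norm_eq_abs, abs_of_nonneg (by positivity)]
      exact hbound x hx
    refine ⟨hfint, ?_⟩
    -- integral estimate
    have step1 : (∫ x in S, (‖x - cp‖ ^ p)⁻¹ * (‖x - cm‖ ^ q)⁻¹) ≤ ∫ x in S, g x :=
      setIntegral_mono_on hfint hgint hSmeas hbound
    have step2 : (∫ x in S, g x)
        = ((R / 2) ^ q)⁻¹ * (∫ x in S, (‖x - cp‖ ^ p)⁻¹)
          + ((R / 2) ^ p)⁻¹ * (∫ x in S, (‖x - cm‖ ^ q)⁻¹) := by
      rw [integral_add hg1 hg2, integral_const_mul, integral_const_mul]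
    have step3 : (∫ x in S, (‖x - cp‖ ^ p)⁻¹)
        ≤ ∫ y in (Metric.ball (0 : E3) D1)ᶜ, (‖y‖ ^ p)⁻¹ := by
      rw [← integral_inv_pow_norm_translate p D1 cp]
      exact setIntegral_mono_set hI1
        (Filter.Eventually.of_forall fun x => by positivity)
        (HasSubset.Subset.eventuallyLE hSsub1)
    have step4 : (∫ x in S, (‖x - cm‖ ^ q)⁻¹)
        ≤ ∫ y in (Metric.ball (0 : E3) D2)ᶜ, (‖y‖ ^ q)⁻¹ := by
      rw [← integral_inv_pow_norm_translate q D2 cm]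
      exact setIntegral_mono_set hI2
        (Filter.Eventually.of_forall fun x => by positivity)
        (HasSubset.Subset.eventuallyLE hSsub2)
    have hinv_q : ((R / 2) ^ q)⁻¹ = 2 ^ q * (R ^ q)⁻¹ := by
      rw [div_pow]; field_simp
    have hinv_p : ((R / 2) ^ p)⁻¹ = 2 ^ p * (R ^ p)⁻¹ := by
      rw [div_pow]; field_simp
    calc (∫ x in S, (‖x - cp‖ ^ p)⁻¹ * (‖x - cm‖ ^ q)⁻¹)
        ≤ ((R / 2) ^ q)⁻¹ * (∫ x in S, (‖x - cp‖ ^ p)⁻¹)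
          + ((R / 2) ^ p)⁻¹ * (∫ x in S, (‖x - cm‖ ^ q)⁻¹) := step1.trans step2.le
      _ ≤ ((R / 2) ^ q)⁻¹ * (∫ y in (Metric.ball (0 : E3) D1)ᶜ, (‖y‖ ^ p)⁻¹)
          + ((R / 2) ^ p)⁻¹ * (∫ y in (Metric.ball (0 : E3) D2)ᶜ, (‖y‖ ^ q)⁻¹) := by
          gcongr <;> positivity
      _ = (2 ^ q * ∫ y in (Metric.ball (0 : E3) D1)ᶜ, (‖y‖ ^ p)⁻¹) * (R ^ q)⁻¹
          + (2 ^ p * ∫ y in (Metric.ball (0 : E3) D2)ᶜ, (‖y‖ ^ q)⁻¹) * (R ^ p)⁻¹ := by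
          rw [hinv_q, hinv_p]; ring
  refine ⟨fun R hR => (main R hR).1, ?_⟩
  set I1 : ℝ := ∫ y in (Metric.ball (0 : E3) D1)ᶜ, (‖y‖ ^ p)⁻¹ with hI1d
  set I2 : ℝ := ∫ y in (Metric.ball (0 : E3) D2)ᶜ, (‖y‖ ^ q)⁻¹ with hI2d
  have hI1nn : 0 ≤ I1 := setIntegral_nonneg
    (measurableSet_ball.compl) (fun x _ => by positivity)
  have hI2nn : 0 ≤ I2 := setIntegral_nonneg
    (measurableSet_ball.compl) (fun x _ => by positivity)
  refine ⟨2 ^ q * I1 + 2 ^ p * I2 + 1, by positivity, fun R hR => ?_⟩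
  have hRpos : 0 < R := lt_of_lt_of_le hR0 hR
  have h := (main R hR).2
  have hu : (0:ℝ) ≤ (R ^ q)⁻¹ := by positivity
  have hv : (0:ℝ) ≤ (R ^ p)⁻¹ := by positivity
  have ha : (0:ℝ) ≤ 2 ^ q * I1 := by positivity
  have hb : (0:ℝ) ≤ 2 ^ p * I2 := by positivity
  refine h.trans ?_
  nlinarith [mul_nonneg hu (add_nonneg hb (by norm_num : (0:ℝ) ≤ 1)),
    mul_nonneg hv (add_nonneg ha (by norm_num : (0:ℝ) ≤ 1))]

end
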